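/- arXiv:0904.2645 — 2 statements merged into one kernel-verified Lean document; each statement's English description precedes it below -/
import Mathlib

section
/- (Weak form of (H2) gives a power lower bound on M.) Let Ω be a bounded open subset of ℝ^d (d ≥ 2) with C² boundary Γ, and let M ∈ C^∞(Ω) with M > 0 on Ω. If there exists c > 0 such that |∇M(x)| ≤ M(x)/(c δ_Γ(x)) for all x ∈ Ω, where δ_Γ(x) = dist(x, Γ), then there exists C' > 0 such that M(x) ≥ C' δ_Γ(x)^{1/c} for all x ∈ Ω. -/
open MeasureTheory Set Filter
open scoped Topology RealInnerProductSpace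

noncomputable section

/-- `d`-dimensional Euclidean space. -/
abbrev Ed (d : ℕ) := EuclideanSpace ℝ (Fin d)

/-- Distance to the boundary `Γ = frontier Ω`. -/
def distGamma {d : ℕ} (Ω : Set (Ed d)) (x : Ed d) : ℝ :=
  Metric.infDist x (frontier Ω)

/-- `Ω` has a `C²` boundary, expressed via a collar of width `ε`: the distance
function to the boundary is `C²` on the collar and the nearest-point projection
onto the boundary is well defined there. -/
def HasC2BoundaryCollar {d : ℕ} (Ω : Set (Ed d)) (ε : ℝ) : Prop :=
  0 < ε ∧
    ContDiffOn ℝ 2 (distGamma Ω) {x ∈ Ω | distGamma Ω x < ε} ∧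
    ∀ x ∈ Ω, distGamma Ω x < ε →
      ∃! y, y ∈ frontier Ω ∧ dist x y = distGamma Ω x

/-- A Maxwellian on `Ω`: smooth, positive on `Ω`, extending continuously by `0`
on the boundary, with unit integral. -/
structure IsMaxwellian {d : ℕ} (Ω : Set (Ed d)) (M : Ed d → ℝ) : Prop where
  smooth : ContDiffOn ℝ (⊤ : ℕ∞) M Ω
  pos : ∀ x ∈ Ω, 0 < M x
  zero_on_boundary : ∀ x ∈ frontier Ω, Tendsto M (𝓝[Ω] x) (𝓝 0)
  integral_one : (∫ x in Ω, M x) = 1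

/-- The gradient of `φ/M`. -/
def gradQuot {d : ℕ} (M φ : Ed d → ℝ) (x : Ed d) : Ed d :=
  gradient (fun y => φ y / M y) x

/-- Membership in the weighted space `L²_M`. -/
def MemL2M {d : ℕ} (Ω : Set (Ed d)) (M φ : Ed d → ℝ) : Prop :=
  IntegrableOn (fun x => M x * (φ x / M x) ^ 2) Ω

/-- Membership in the weighted space `H¹_M`. -/
def MemH1M {d : ℕ} (Ω : Set (Ed d)) (M φ : Ed d → ℝ) : Prop :=
  MemL2M Ω M φ ∧ DifferentiableOn ℝ (fun y => φ y / M y) Ω ∧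
    IntegrableOn (fun x => M x * ‖gradQuot M φ x‖ ^ 2) Ω

/-- Membership in `H¹_{M,0}`: elements of `H¹_M` with zero average. -/
def MemH1M0 {d : ℕ} (Ω : Set (Ed d)) (M φ : Ed d → ℝ) : Prop :=
  MemH1M Ω M φ ∧ (∫ x in Ω, φ x) = 0

/-- Squared `L²_M` norm. -/
def L2Mnorm2 {d : ℕ} (Ω : Set (Ed d)) (M φ : Ed d → ℝ) : ℝ :=
  ∫ x in Ω, M x * (φ x / M x) ^ 2

/-- Squared `H¹_M` norm. -/
def H1Mnorm2 {d : ℕ} (Ω : Set (Ed d)) (M φ : Ed d → ℝ) : ℝ :=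
  ∫ x in Ω, M x * ((φ x / M x) ^ 2 + ‖gradQuot M φ x‖ ^ 2)

/-- Squared `H¹_{M,0}` (semi-)norm. -/
def H1M0norm2 {d : ℕ} (Ω : Set (Ed d)) (M φ : Ed d → ℝ) : ℝ :=
  ∫ x in Ω, M x * ‖gradQuot M φ x‖ ^ 2

/-- Membership in `H⁻¹_M`: continuous linear functionals on `H¹_{M,0}`. -/
structure MemHm1M {d : ℕ} (Ω : Set (Ed d)) (M : Ed d → ℝ)
    (f : (Ed d → ℝ) → ℝ) : Prop where
  map_add : ∀ φ ψ, MemH1M0 Ω M φ → MemH1M0 Ω M ψ → f (φ + ψ) = f φ + f ψ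
  map_smul : ∀ (c : ℝ) (φ), MemH1M0 Ω M φ → f (c • φ) = c * f φ
  bound : ∃ C : ℝ, ∀ φ, MemH1M0 Ω M φ → |f φ| ≤ C * Real.sqrt (H1M0norm2 Ω M φ)

/-- Derivative in the inward normal direction (the direction of `∇δ_Γ`). -/
def nder {d : ℕ} (Ω : Set (Ed d)) (u : Ed d → ℝ) (x : Ed d) : ℝ :=
  ⟪gradient u x, gradient (distGamma Ω) x⟫

/-- Assumption `(H1)` on the collar of width `ε`. -/
def HypH1 {d : ℕ} (Ω : Set (Ed d)) (M : Ed d → ℝ) (ε : ℝ) : Prop :=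
  (∃ a : ℝ, a < 1 ∧ ∀ x ∈ Ω, distGamma Ω x < ε →
      -a / (distGamma Ω x) ^ 2 ≤
        (nder Ω M x / M x) ^ 2 + 2 * nder Ω (fun y => nder Ω M y / M y) x) ∧
    (∀ x ∈ frontier Ω, Tendsto (nder Ω M) (𝓝[Ω] x) (𝓝 0)) ∧
    ∃ b : ℝ, 0 < b ∧ ∀ x ∈ Ω, distGamma Ω x < ε →
      nder Ω M x *
          ∫ t in (distGamma Ω x)..ε,
            (M (x + (t - distGamma Ω x) • gradient (distGamma Ω) x))⁻¹ ≤ b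

/-- Assumption `(H2)` with explicit constant `c`. -/
def HypH2With {d : ℕ} (Ω : Set (Ed d)) (M : Ed d → ℝ) (c : ℝ) : Prop :=
  ∀ x ∈ Ω, ‖gradient M x‖ ≤ M x / (c * distGamma Ω x)

/-- Assumption `(H2)`. -/
def HypH2 {d : ℕ} (Ω : Set (Ed d)) (M : Ed d → ℝ) : Prop :=
  ∃ c : ℝ, 0 < c ∧ HypH2With Ω M c

/-- Assumption `(H3)` with explicit constant `γ`:
the Hessian matrix `∇(∇M/M) ≤ -γ·Id` in the sense of quadratic forms. -/
def HypH3With {d : ℕ} (Ω : Set (Ed d)) (M : Ed d → ℝ) (γ : ℝ) : Prop :=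
  ∀ x ∈ Ω, ∀ h : Ed d,
    ⟪fderiv ℝ (fun y => (M y)⁻¹ • gradient M y) x h, h⟫ ≤ -γ * ‖h‖ ^ 2

/-- Assumption `(H3)`. -/
def HypH3 {d : ℕ} (Ω : Set (Ed d)) (M : Ed d → ℝ) : Prop :=
  ∃ γ : ℝ, 0 < γ ∧ HypH3With Ω M γ

/-- `κ ∈ L^∞(Ω; ℝ^d)`: measurable and (essentially) bounded on `Ω`. -/
def BddVecField {d : ℕ} (Ω : Set (Ed d)) (κ : Ed d → Ed d) : Prop :=
  AEStronglyMeasurable κ (volume.restrict Ω) ∧ ∃ C : ℝ, ∀ x ∈ Ω, ‖κ x‖ ≤ C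

/-- The bilinear form of the weak formulation of the Fokker–Planck equation:
`∫_Ω M ∇(φ/M)·∇(ψ/M) − ∫_Ω φ κ·∇(ψ/M)`. -/
def bform {d : ℕ} (Ω : Set (Ed d)) (M : Ed d → ℝ) (κ : Ed d → Ed d)
    (φ ψ : Ed d → ℝ) : ℝ :=
  (∫ x in Ω, M x * ⟪gradQuot M φ x, gradQuot M ψ x⟫) -
    ∫ x in Ω, φ x * ⟪κ x, gradQuot M ψ x⟫

/-- Membership in `H¹(Ω)`. -/
def MemH1 {d : ℕ} (Ω : Set (Ed d)) (u : Ed d → ℝ) : Prop :=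
  IntegrableOn (fun x => (u x) ^ 2) Ω ∧ DifferentiableOn ℝ u Ω ∧
    IntegrableOn (fun x => ‖gradient u x‖ ^ 2) Ω

/-- Membership in `H¹₀(Ω)`: in `H¹(Ω)` and approximable in the `H¹` norm by
smooth compactly supported functions. -/
def MemH10 {d : ℕ} (Ω : Set (Ed d)) (u : Ed d → ℝ) : Prop :=
  MemH1 Ω u ∧ ∀ δ : ℝ, 0 < δ → ∃ ψ : Ed d → ℝ,
    ContDiff ℝ (⊤ : ℕ∞) ψ ∧ HasCompactSupport ψ ∧ tsupport ψ ⊆ Ω ∧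
    (∫ x in Ω, ((u x - ψ x) ^ 2 + ‖gradient u x - gradient ψ x‖ ^ 2)) < δ

/-- Divergence of a vector field on `ℝ^d`. -/
def diverg {d : ℕ} (X : Ed d → Ed d) (x : Ed d) : ℝ :=
  ∑ i : Fin d, ⟪fderiv ℝ X x (EuclideanSpace.single i (1 : ℝ)),
    EuclideanSpace.single i (1 : ℝ)⟫

namespace H2Aux


variable {d : ℕ} {Ω : Set (Ed d)} {ε : ℝ}

lemma dg_lip (Ω : Set (Ed d)) : LipschitzWith 1 (distGamma Ω) :=
  Metric.lipschitz_infDist_pt _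

lemma dg_le_dist_add (x y : Ed d) : distGamma Ω x ≤ distGamma Ω y + dist x y := by
  have h := abs_le.mp (by simpa [Real.dist_eq] using (dg_lip Ω).dist_le_mul x y)
  linarith [h.1, h.2]

lemma isCompact_frontier (hΩb : Bornology.IsBounded Ω) : IsCompact (frontier Ω) := by
  have : Bornology.IsBounded (frontier Ω) := (hΩb.closure).subset frontier_subset_closure
  exact Metric.isCompact_of_isClosed_isBounded isClosed_frontier this

lemma frontier_nonempty (hd : 0 < d) (hΩb : Bornology.IsBounded Ω) (hne : Ω.Nonempty) :
    (frontier Ω).Nonempty := by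
  by_contra h
  rw [Set.not_nonempty_iff_eq_empty] at h
  have hclopen : IsClopen Ω := isClopen_iff_frontier_eq_empty.mpr h
  rcases isClopen_iff.mp hclopen with h1 | h1
  · exact hne.ne_empty h1
  · have hb : Bornology.IsBounded (Set.univ : Set (Ed d)) := h1 ▸ hΩb
    rcases hb.exists_norm_le with ⟨C, hC⟩
    set v : Ed d := (|C|+1) • EuclideanSpace.single ⟨0, hd⟩ (1:ℝ) with hv
    have h2 := hC v (Set.mem_univ v)
    have : ‖v‖ = |C| + 1 := by
      rw [hv, norm_smul, EuclideanSpace.norm_single]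
      simp [abs_of_nonneg (by positivity : (0:ℝ) ≤ |C|+1)]
    rw [this] at h2
    have := le_abs_self C
    linarith

lemma mem_of_closure_of_pos (hΩo : IsOpen Ω) {z : Ed d} (hz : z ∈ closure Ω)
    (hpos : 0 < distGamma Ω z) : z ∈ Ω := by
  by_contra hzo
  have : z ∈ frontier Ω := by
    rw [hΩo.frontier_eq]; exact ⟨hz, hzo⟩
  have : distGamma Ω z = 0 := Metric.infDist_zero_of_mem this
  linarith

lemma dg_pos (hΩo : IsOpen Ω) (hfr : (frontier Ω).Nonempty) {x : Ed d} (hx : x ∈ Ω) :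
    0 < distGamma Ω x := by
  rw [distGamma, ← IsClosed.notMem_iff_infDist_pos isClosed_frontier hfr]
  rw [hΩo.frontier_eq]
  rintro ⟨-, h2⟩; exact h2 hx

lemma inner_gradient_apply (f : Ed d → ℝ) (x h : Ed d) :
    ⟪gradient f x, h⟫ = fderiv ℝ f x h := InnerProductSpace.toDual_symm_apply

lemma norm_gradient_eq (f : Ed d → ℝ) (x : Ed d) :
    ‖gradient f x‖ = ‖fderiv ℝ f x‖ := by
  rw [gradient]
  exact LinearIsometryEquiv.norm_map _ _

lemma isOpen_U (hΩo : IsOpen Ω) (ε : ℝ) : IsOpen {y ∈ Ω | distGamma Ω y < ε} := by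
  have : ({y ∈ Ω | distGamma Ω y < ε} : Set (Ed d)) =
      Ω ∩ (distGamma Ω) ⁻¹' (Iio ε) := rfl
  rw [this]
  exact hΩo.inter (isOpen_Iio.preimage (Metric.continuous_infDist_pt _))

lemma grad_dist_eq (hΩo : IsOpen Ω)
    (hc2 : ContDiffOn ℝ 2 (distGamma Ω) {y ∈ Ω | distGamma Ω y < ε})
    {x p : Ed d} (hx : x ∈ Ω) (hxe : distGamma Ω x < ε) (hδ : 0 < distGamma Ω x)
    (hp : p ∈ frontier Ω) (hdp : dist x p = distGamma Ω x) :
    gradient (distGamma Ω) x = (distGamma Ω x)⁻¹ • (x - p) := by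
  set t₀ := distGamma Ω x with ht₀
  set v : Ed d := t₀⁻¹ • (x - p) with hv
  have hxp : ‖x - p‖ = t₀ := by rw [← dist_eq_norm]; exact hdp
  have htv : t₀ • v = x - p := by
    rw [hv, smul_inv_smul₀ hδ.ne']
  have hnv : ‖v‖ = 1 := by
    rw [hv, norm_smul, hxp, norm_inv, Real.norm_of_nonneg hδ.le, inv_mul_cancel₀ hδ.ne']
  have hdiff : DifferentiableAt ℝ (distGamma Ω) x :=
    (hc2.contDiffAt ((isOpen_U hΩo ε).mem_nhds ⟨hx, hxe⟩)).differentiableAt (by simp)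
  set f : ℝ → ℝ := fun t => distGamma Ω (x - t • v) with hf
  have hf_eq : ∀ t ∈ Icc (0:ℝ) t₀, f t = t₀ - t := by
    intro t ht
    have hle : f t ≤ t₀ - t := by
      have h1 : distGamma Ω (x - t • v) ≤ dist (x - t • v) p :=
        Metric.infDist_le_dist_of_mem hp
      have h2 : dist (x - t • v) p = t₀ - t := by
        rw [dist_eq_norm]
        have : x - t • v - p = (t₀ - t) • v := by
          rw [sub_smul, htv]; abel
        rw [this, norm_smul, hnv, mul_one, Real.norm_of_nonneg (by linarith [ht.2])]
      rw [hf]; rw [← h2] at *; exact h1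
    have hge : t₀ - t ≤ f t := by
      have h3 := dg_le_dist_add (Ω := Ω) x (x - t • v)
      have h4 : dist x (x - t • v) = t := by
        rw [dist_eq_norm]
        have : x - (x - t • v) = t • v := by abel
        rw [this, norm_smul, hnv, mul_one, Real.norm_of_nonneg ht.1]
      rw [h4] at h3
      rw [hf]; linarith
    linarith
  have hc0 : HasDerivAt (fun t : ℝ => x - t • v) (-v) 0 := by
    simpa using ((hasDerivAt_id (0:ℝ)).smul_const v).const_sub x
  have h2 : HasDerivWithinAt f (fderiv ℝ (distGamma Ω) x (-v)) (Ici 0) 0 := by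
    have hF : HasFDerivAt (distGamma Ω) (fderiv ℝ (distGamma Ω) x) (x - (0:ℝ) • v) := by
      simpa using hdiff.hasFDerivAt
    exact (hF.comp_hasDerivAt 0 hc0).hasDerivWithinAt
  have h1 : HasDerivWithinAt f (-1) (Ici 0) 0 := by
    have hlin : HasDerivWithinAt (fun t : ℝ => t₀ - t) (-1) (Ici 0) 0 :=
      ((hasDerivAt_id (0:ℝ)).const_sub t₀).hasDerivWithinAt
    apply hlin.congr_of_eventuallyEq
    · filter_upwards [Icc_mem_nhdsGE_of_mem (⟨le_rfl, hδ⟩ : (0:ℝ) ∈ Ico 0 t₀)] with t ht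
      exact hf_eq t ht
    · simpa using hf_eq 0 ⟨le_rfl, hδ.le⟩
  have huniq : fderiv ℝ (distGamma Ω) x (-v) = -1 := by
    rw [← h2.derivWithin (uniqueDiffOn_Ici 0 0 self_mem_Ici), ← h1.derivWithin (uniqueDiffOn_Ici 0 0 self_mem_Ici)]
  have hLv : fderiv ℝ (distGamma Ω) x v = 1 := by
    have := huniq
    rw [map_neg] at this
    linarith
  have hL : ‖fderiv ℝ (distGamma Ω) x‖ ≤ 1 := by
    simpa using hdiff.hasFDerivAt.le_of_lipschitz (dg_lip Ω)
  set g := gradient (distGamma Ω) x with hg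
  have hgv : ⟪g, v⟫ = 1 := by rw [hg, inner_gradient_apply, hLv]
  have hgn : ‖g‖ ≤ 1 := by rw [hg, norm_gradient_eq]; exact hL
  have hsq : ‖g - v‖ ^ 2 ≤ 0 := by
    have hexp : ‖g - v‖ ^ 2 = ‖g‖ ^ 2 - 2 * ⟪g, v⟫ + ‖v‖ ^ 2 := by
      rw [@norm_sub_sq_real (Ed d)]
    rw [hexp, hgv, hnv]
    nlinarith [norm_nonneg g]
  have : g = v := by
    have h0 : ‖g - v‖ = 0 := by nlinarith [norm_nonneg (g - v), sq_nonneg ‖g - v‖]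
    have := norm_sub_eq_zero_iff.mp h0
    exact this
  exact this

lemma contDiffOn_G (hΩo : IsOpen Ω)
    (hc2 : ContDiffOn ℝ 2 (distGamma Ω) {y ∈ Ω | distGamma Ω y < ε}) :
    ContDiffOn ℝ 1 (fun y => gradient (distGamma Ω) y) {y ∈ Ω | distGamma Ω y < ε} := by
  have h1 : ContDiffOn ℝ 1 (fderiv ℝ (distGamma Ω)) {y ∈ Ω | distGamma Ω y < ε} :=
    hc2.fderiv_of_isOpen (isOpen_U hΩo ε) (by norm_num)
  have h2 : ContDiff ℝ 1 ((InnerProductSpace.toDual ℝ (Ed d)).symm : _ → Ed d) :=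
    (InnerProductSpace.toDual ℝ (Ed d)).symm.contDiff.of_le le_top
  exact h2.comp_contDiffOn h1

lemma diffAt_G (hΩo : IsOpen Ω)
    (hc2 : ContDiffOn ℝ 2 (distGamma Ω) {y ∈ Ω | distGamma Ω y < ε})
    {q : Ed d} (hq : q ∈ Ω) (hqe : distGamma Ω q < ε) :
    DifferentiableAt ℝ (fun y => gradient (distGamma Ω) y) q :=
  (((contDiffOn_G hΩo hc2).contDiffAt ((isOpen_U hΩo ε).mem_nhds ⟨hq, hqe⟩))).differentiableAt
    one_ne_zero

lemma hess_apply (hΩo : IsOpen Ω)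
    (hc2 : ContDiffOn ℝ 2 (distGamma Ω) {y ∈ Ω | distGamma Ω y < ε})
    {q : Ed d} (hq : q ∈ Ω) (hqe : distGamma Ω q < ε) (h k : Ed d) :
    ⟪fderiv ℝ (fun y => gradient (distGamma Ω) y) q h, k⟫ =
      fderiv ℝ (fderiv ℝ (distGamma Ω)) q h k := by
  have h1 : ContDiffOn ℝ 1 (fderiv ℝ (distGamma Ω)) {y ∈ Ω | distGamma Ω y < ε} :=
    hc2.fderiv_of_isOpen (isOpen_U hΩo ε) (by norm_num)
  have hdiff' : DifferentiableAt ℝ (fderiv ℝ (distGamma Ω)) q :=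
    (h1.contDiffAt ((isOpen_U hΩo ε).mem_nhds ⟨hq, hqe⟩)).differentiableAt one_ne_zero
  have e1 : (fun y => ⟪gradient (distGamma Ω) y, k⟫) = fun y => fderiv ℝ (distGamma Ω) y k :=
    funext fun y => inner_gradient_apply _ _ _
  have lhs : fderiv ℝ (fun y => ⟪gradient (distGamma Ω) y, k⟫) q h =
      ⟪fderiv ℝ (fun y => gradient (distGamma Ω) y) q h, k⟫ := by
    rw [fderiv_inner_apply ℝ (diffAt_G hΩo hc2 hq hqe) (differentiableAt_const k) h]
    simp
  have rhs : HasFDerivAt (fun y => fderiv ℝ (distGamma Ω) y k)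
      ((ContinuousLinearMap.apply ℝ ℝ k).comp (fderiv ℝ (fderiv ℝ (distGamma Ω)) q)) q :=
    (ContinuousLinearMap.apply ℝ ℝ k).hasFDerivAt.comp q hdiff'.hasFDerivAt
  have : fderiv ℝ (fun y => ⟪gradient (distGamma Ω) y, k⟫) q h =
      fderiv ℝ (fderiv ℝ (distGamma Ω)) q h k := by
    rw [e1, rhs.fderiv]
    rfl
  rw [← lhs, this]

lemma hess_symm (hΩo : IsOpen Ω)
    (hc2 : ContDiffOn ℝ 2 (distGamma Ω) {y ∈ Ω | distGamma Ω y < ε})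
    {q : Ed d} (hq : q ∈ Ω) (hqe : distGamma Ω q < ε) (h k : Ed d) :
    ⟪fderiv ℝ (fun y => gradient (distGamma Ω) y) q h, k⟫ =
      ⟪fderiv ℝ (fun y => gradient (distGamma Ω) y) q k, h⟫ := by
  rw [hess_apply hΩo hc2 hq hqe, hess_apply hΩo hc2 hq hqe]
  have h1 : ContDiffOn ℝ 1 (fderiv ℝ (distGamma Ω)) {y ∈ Ω | distGamma Ω y < ε} :=
    hc2.fderiv_of_isOpen (isOpen_U hΩo ε) (by norm_num)
  have hdiff' : DifferentiableAt ℝ (fderiv ℝ (distGamma Ω)) q :=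
    (h1.contDiffAt ((isOpen_U hΩo ε).mem_nhds ⟨hq, hqe⟩)).differentiableAt one_ne_zero
  have hev : ∀ᶠ y in 𝓝 q, HasFDerivAt (distGamma Ω) (fderiv ℝ (distGamma Ω) y) y := by
    filter_upwards [(isOpen_U hΩo ε).mem_nhds ⟨hq, hqe⟩] with y hy
    exact ((hc2.contDiffAt ((isOpen_U hΩo ε).mem_nhds hy)).differentiableAt
      (by simp)).hasFDerivAt
  exact second_derivative_symmetric_of_eventually hev hdiff'.hasFDerivAt h k

lemma dg_lip' (Ω : Set (Ed d)) : LipschitzWith 1 (distGamma Ω) :=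
  Metric.lipschitz_infDist_pt _

lemma norm_G_one (hΩo : IsOpen Ω) (hΩb : Bornology.IsBounded Ω)
    (hc2 : ContDiffOn ℝ 2 (distGamma Ω) {y ∈ Ω | distGamma Ω y < ε})
    (hfr : (frontier Ω).Nonempty)
    {q : Ed d} (hq : q ∈ Ω) (hqe : distGamma Ω q < ε) :
    ‖gradient (distGamma Ω) q‖ = 1 := by
  obtain ⟨p, hp, hdp⟩ := (isCompact_frontier hΩb).exists_infDist_eq_dist hfr q
  have hδ : 0 < distGamma Ω q := dg_pos hΩo hfr hq
  rw [grad_dist_eq hΩo hc2 hq hqe hδ hp hdp.symm]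
  rw [norm_smul, norm_inv, Real.norm_of_nonneg hδ.le]
  rw [← dist_eq_norm, ← hdp]
  have : Metric.infDist q (frontier Ω) = distGamma Ω q := rfl
  rw [this]
  field_simp

lemma hess_inner_G_zero (hΩo : IsOpen Ω) (hΩb : Bornology.IsBounded Ω)
    (hc2 : ContDiffOn ℝ 2 (distGamma Ω) {y ∈ Ω | distGamma Ω y < ε})
    (hfr : (frontier Ω).Nonempty)
    {q : Ed d} (hq : q ∈ Ω) (hqe : distGamma Ω q < ε) (h : Ed d) :
    ⟪fderiv ℝ (fun y => gradient (distGamma Ω) y) q h, gradient (distGamma Ω) q⟫ = 0 := by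
  have hFconst : (fun y => ⟪gradient (distGamma Ω) y, gradient (distGamma Ω) y⟫)
      =ᶠ[𝓝 q] (fun _ => (1:ℝ)) := by
    filter_upwards [(isOpen_U hΩo ε).mem_nhds ⟨hq, hqe⟩] with y hy
    rw [real_inner_self_eq_norm_sq, norm_G_one hΩo hΩb hc2 hfr hy.1 hy.2]
    norm_num
  have h0 : fderiv ℝ (fun y => ⟪gradient (distGamma Ω) y, gradient (distGamma Ω) y⟫) q = 0 := by
    rw [hFconst.fderiv_eq]
    simp
  have h1 := fderiv_inner_apply ℝ (diffAt_G hΩo hc2 hq hqe) (diffAt_G hΩo hc2 hq hqe) h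
  rw [h0] at h1
  simp only [ContinuousLinearMap.zero_apply] at h1
  have h2 : ⟪gradient (distGamma Ω) q, fderiv ℝ (fun y => gradient (distGamma Ω) y) q h⟫ =
      ⟪fderiv ℝ (fun y => gradient (distGamma Ω) y) q h, gradient (distGamma Ω) q⟫ :=
    real_inner_comm _ _
  linarith [h1.symm, h2]

lemma hess_G_G_zero (hΩo : IsOpen Ω) (hΩb : Bornology.IsBounded Ω)
    (hc2 : ContDiffOn ℝ 2 (distGamma Ω) {y ∈ Ω | distGamma Ω y < ε})
    (hfr : (frontier Ω).Nonempty)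
    {q : Ed d} (hq : q ∈ Ω) (hqe : distGamma Ω q < ε) :
    fderiv ℝ (fun y => gradient (distGamma Ω) y) q (gradient (distGamma Ω) q) = 0 := by
  set w := fderiv ℝ (fun y => gradient (distGamma Ω) y) q (gradient (distGamma Ω) q) with hw
  have : ⟪w, w⟫ = 0 := by
    rw [hw, hess_symm hΩo hc2 hq hqe]
    exact hess_inner_G_zero hΩo hΩb hc2 hfr hq hqe _
  exact inner_self_eq_zero.mp this


set_option maxHeartbeats 1000000 in
lemma ray (hΩo : IsOpen Ω) (hΩb : Bornology.IsBounded Ω)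
    (hc2 : ContDiffOn ℝ 2 (distGamma Ω) {y ∈ Ω | distGamma Ω y < ε})
    (hfr : (frontier Ω).Nonempty)
    {x : Ed d} (hx : x ∈ Ω) (hxe : distGamma Ω x < ε)
    {t' : ℝ} (ht0' : distGamma Ω x ≤ t') (ht' : t' < ε) :
    ∃ p u : Ed d, ‖u‖ = 1 ∧ p + (distGamma Ω x) • u = x ∧
      ∀ t ∈ Icc (distGamma Ω x) t', p + t • u ∈ Ω ∧ distGamma Ω (p + t • u) = t := by
  obtain ⟨p, hp, hdp⟩ := (isCompact_frontier hΩb).exists_infDist_eq_dist hfr x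
  set t₀ := distGamma Ω x with ht₀def
  have hδ : 0 < t₀ := dg_pos hΩo hfr hx
  set u : Ed d := t₀⁻¹ • (x - p) with hu
  have hgx : gradient (distGamma Ω) x = u := grad_dist_eq hΩo hc2 hx hxe hδ hp hdp.symm
  have hnu : ‖u‖ = 1 := by rw [← hgx]; exact norm_G_one hΩo hΩb hc2 hfr hx hxe
  have hpt : p + t₀ • u = x := by rw [hu, smul_inv_smul₀ hδ.ne']; abel
  set z : ℝ → Ed d := fun t => p + t • u with hz
  set S : Set ℝ := {t | t ∈ Icc t₀ t' ∧ z t ∈ closure Ω ∧ distGamma Ω (z t) = t} with hS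
  have hzdist : ∀ s t : ℝ, dist (z s) (z t) = |s - t| := by
    intro s t
    rw [hz, dist_eq_norm]
    have : p + s • u - (p + t • u) = (s - t) • u := by
      rw [sub_smul]; abel
    rw [this, norm_smul, hnu, mul_one, Real.norm_eq_abs]
  have hzcont : Continuous z := by
    apply continuous_const.add
    exact continuous_id.smul continuous_const
  have hSclosed : IsClosed S := by
    rw [hS]
    have : {t : ℝ | t ∈ Icc t₀ t' ∧ z t ∈ closure Ω ∧ distGamma Ω (z t) = t} =
        (Icc t₀ t') ∩ (z ⁻¹' closure Ω) ∩ {t | distGamma Ω (z t) - t = 0} := by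
      ext t; constructor
      · rintro ⟨h1, h2, h3⟩; exact ⟨⟨h1, h2⟩, by simp [h3]⟩
      · rintro ⟨⟨h1, h2⟩, h3⟩
        simp only [Set.mem_setOf_eq] at h3
        exact ⟨h1, h2, by linarith⟩
    rw [this]
    refine ((isClosed_Icc.inter (isClosed_closure.preimage hzcont)).inter ?_)
    have : Continuous fun t => distGamma Ω (z t) - t :=
      ((Metric.continuous_infDist_pt _).comp hzcont).sub continuous_id
    exact isClosed_eq this continuous_const
  have ht₀S : t₀ ∈ S := by
    refine ⟨⟨le_rfl, ht0'⟩, ?_, ?_⟩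
    · rw [hz]; simp only []; rw [hpt]; exact subset_closure hx
    · rw [hz]; simp only []; rw [hpt]
  have hmem : ∀ t ∈ S, z t ∈ Ω := by
    intro t ht
    have h2 := ht.2.2
    exact mem_of_closure_of_pos hΩo ht.2.1 (by rw [h2]; exact lt_of_lt_of_le hδ ht.1.1)
  -- local step
  have hloc : ∀ T, T ∈ S → T < t' → ∃ h > 0, ∀ t, t ∈ Icc T (T + h) → t ≤ t' → t ∈ S := by
    intro T hTmem hTlt
    have hw : z T ∈ Ω := hmem T hTmem
    have hδT : distGamma Ω (z T) = T := hTmem.2.2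
    have hTpos : 0 < T := lt_of_lt_of_le hδ hTmem.1.1
    have hTε : distGamma Ω (z T) < ε := by rw [hδT]; linarith
    have hdzp : dist (z T) p = T := by
      have : dist (z T) (z 0) = |T - 0| := hzdist T 0
      rw [hz] at this ⊢
      simp only [zero_smul, add_zero] at this
      rw [this, sub_zero, abs_of_pos hTpos]
    have hgw : gradient (distGamma Ω) (z T) = u := by
      rw [grad_dist_eq hΩo hc2 hw hTε (by rw [hδT]; exact hTpos) hp (by rw [hdzp, hδT])]
      rw [hδT]
      have hzTp : z T - p = T • u := by
        show p + T • u - p = T • u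
        abel
      rw [hzTp, smul_smul, inv_mul_cancel₀ hTpos.ne', one_smul]
    obtain ⟨r, hr0, hball⟩ := Metric.isOpen_iff.mp (isOpen_U hΩo ε) (z T) ⟨hw, hTε⟩
    have hball2 : Metric.closedBall (z T) (r/2) ⊆ {y ∈ Ω | distGamma Ω y < ε} := by
      intro q hq
      exact hball (lt_of_le_of_lt (Metric.mem_closedBall.mp hq) (by linarith))
    -- Hessian bound
    have hcontB : ContinuousOn (fderiv ℝ (fun y => gradient (distGamma Ω) y))
        (Metric.closedBall (z T) (r/2)) :=
      ((contDiffOn_G hΩo hc2).continuousOn_fderiv_of_isOpen (isOpen_U hΩo ε)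
        (le_refl 1)).mono hball2
    obtain ⟨C, hC⟩ := (isCompact_closedBall (z T) (r/2)).exists_bound_of_continuousOn hcontB
    set Λ := max C 0 with hΛ
    have hΛ0 : 0 ≤ Λ := le_max_right _ _
    have hΛB : ∀ q ∈ Metric.closedBall (z T) (r/2),
        ‖fderiv ℝ (fun y => gradient (distGamma Ω) y) q‖ ≤ Λ := by
      intro q hq; exact le_trans (hC q hq) (le_max_left _ _)
    set h := min (r/2) (t' - T) with hhdef
    have hh0 : 0 < h := lt_min (by linarith) (by linarith)
    refine ⟨h, hh0, ?_⟩
    have hztball : ∀ t ∈ Icc T (T + h), z t ∈ Metric.closedBall (z T) (r/2) := by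
      intro t ht
      rw [Metric.mem_closedBall, hzdist t T, abs_of_nonneg (by linarith [ht.1])]
      have := ht.2
      have : t - T ≤ h := by linarith
      exact le_trans this (min_le_left _ _)
    have hztU : ∀ t ∈ Icc T (T + h), z t ∈ Ω ∧ distGamma Ω (z t) < ε := by
      intro t ht; exact hball2 (hztball t ht)
    -- derivative of G ∘ z
    have hGz : ∀ t ∈ Icc T (T + h), HasDerivAt (fun s => gradient (distGamma Ω) (z s))
        (fderiv ℝ (fun y => gradient (distGamma Ω) y) (z t) u) t := by
      intro t ht
      have hzd : HasDerivAt z u t := by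
        have : HasDerivAt (fun s : ℝ => p + s • u) u t := by
          simpa using ((hasDerivAt_id t).smul_const u).const_add p
        exact this
      exact ((diffAt_G hΩo hc2 (hztU t ht).1 (hztU t ht).2).hasFDerivAt).comp_hasDerivAt t hzd
    -- ρ and its derivative
    set ρ : ℝ → ℝ := fun t => ⟪gradient (distGamma Ω) (z t) - u, gradient (distGamma Ω) (z t) - u⟫
      with hρdef
    have hρderiv : ∀ t ∈ Icc T (T + h), HasDerivAt ρ
        (2 * ⟪fderiv ℝ (fun y => gradient (distGamma Ω) y) (z t) u,
          gradient (distGamma Ω) (z t) - u⟫) t := by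
      intro t ht
      have hF : HasDerivAt (fun s => gradient (distGamma Ω) (z s) - u)
          (fderiv ℝ (fun y => gradient (distGamma Ω) y) (z t) u) t := by
        simpa using (hGz t ht).sub_const u
      have := hF.inner ℝ hF
      have hcomm : ⟪gradient (distGamma Ω) (z t) - u,
            fderiv ℝ (fun y => gradient (distGamma Ω) y) (z t) u⟫ =
          ⟪fderiv ℝ (fun y => gradient (distGamma Ω) y) (z t) u,
            gradient (distGamma Ω) (z t) - u⟫ := real_inner_comm _ _
      rw [hcomm] at this
      rw [← two_mul] at this
      exact this
    -- derivative bound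
    have hbound : ∀ t ∈ Icc T (T + h),
        2 * ⟪fderiv ℝ (fun y => gradient (distGamma Ω) y) (z t) u,
          gradient (distGamma Ω) (z t) - u⟫ ≤ 2 * Λ * ρ t := by
      intro t ht
      obtain ⟨hzΩ, hzε⟩ := hztU t ht
      set g := gradient (distGamma Ω) (z t) with hgdef
      set B := fderiv ℝ (fun y => gradient (distGamma Ω) y) (z t) with hBdef
      have hgn : ‖g‖ = 1 := norm_G_one hΩo hΩb hc2 hfr hzΩ hzε
      have hBg : B g = 0 := hess_G_G_zero hΩo hΩb hc2 hfr hzΩ hzε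
      have hBin : ∀ k : Ed d, ⟪B k, g⟫ = 0 := fun k =>
        hess_inner_G_zero hΩo hΩb hc2 hfr hzΩ hzε k
      set α := ⟪u, g⟫ with hα
      set w0 := u - α • g with hw0
      have hBu : B u = B w0 := by
        have hsm : B (α • g) = α • B g := B.map_smul α g
        rw [hw0, map_sub, hsm, hBg, smul_zero, sub_zero]
      have hBuu : ⟪B u, u⟫ = ⟪B w0, w0⟫ := by
        rw [hBu]
        have : (u : Ed d) = w0 + α • g := by rw [hw0]; abel
        conv_lhs => rw [this]
        rw [inner_add_right, real_inner_smul_right, hBin w0, mul_zero, add_zero]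
      have hBug : ⟪B u, g⟫ = 0 := hBin u
      have hlhs : ⟪B u, g - u⟫ = -⟪B w0, w0⟫ := by
        rw [inner_sub_right, hBug, hBuu]; ring
      have hnw0 : ‖w0‖ ^ 2 = 1 - α ^ 2 := by
        have e1 : ‖α • g‖ ^ 2 = α ^ 2 * ‖g‖ ^ 2 := by
          rw [norm_smul, Real.norm_eq_abs, mul_pow, sq_abs]
        have e2 : ‖w0‖ ^ 2 = ‖u‖ ^ 2 - 2 * ⟪u, α • g⟫ + ‖α • g‖ ^ 2 := by
          rw [hw0]; exact norm_sub_sq_real u (α • g)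
        have e3 : ⟪u, α • g⟫ = α * α := by rw [real_inner_smul_right, ← hα]
        rw [e2, e3, e1, hnu, hgn]; ring
      have hρt : ρ t = 2 - 2 * α := by
        have e0 : ρ t = ‖g - u‖ ^ 2 := real_inner_self_eq_norm_sq (g - u)
        have e1 : ‖g - u‖ ^ 2 = ‖g‖ ^ 2 - 2 * ⟪g, u⟫ + ‖u‖ ^ 2 := norm_sub_sq_real g u
        have e2 : ⟪g, u⟫ = α := by rw [hα]; exact (real_inner_comm g u).symm
        rw [e0, e1, e2, hnu, hgn]; ring
      have hBw0 : |⟪B w0, w0⟫| ≤ Λ * ‖w0‖ ^ 2 := by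
        have h1 : |⟪B w0, w0⟫| ≤ ‖B w0‖ * ‖w0‖ := abs_real_inner_le_norm _ _
        have h2 : ‖B w0‖ ≤ ‖B‖ * ‖w0‖ := B.le_opNorm w0
        have h3 : ‖B‖ ≤ Λ := hΛB (z t) (hztball t ht)
        have h4 : ‖B w0‖ * ‖w0‖ ≤ Λ * ‖w0‖ ^ 2 := by
          nlinarith [norm_nonneg w0, norm_nonneg (B w0), norm_nonneg B]
        linarith
      have hαle : α ≤ 1 := by
        have := real_inner_le_norm u g
        rw [hnu, hgn] at this; simpa using this
      have h1α : 1 - α ^ 2 ≤ ρ t := by rw [hρt]; nlinarith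
      have hfin : -⟪B w0, w0⟫ ≤ Λ * ρ t := by
        have := neg_abs_le ⟪B w0, w0⟫
        have h5 : Λ * ‖w0‖ ^ 2 ≤ Λ * ρ t := by
          rw [hnw0]
          exact mul_le_mul_of_nonneg_left h1α hΛ0
        linarith [hBw0]
      rw [hlhs] at *
      linarith [hfin]
    -- Gronwall
    set φ : ℝ → ℝ := fun t => ρ t * Real.exp (-(2 * Λ) * t) with hφdef
    have hφderiv : ∀ t ∈ Icc T (T + h), HasDerivAt φ
        ((2 * ⟪fderiv ℝ (fun y => gradient (distGamma Ω) y) (z t) u,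
          gradient (distGamma Ω) (z t) - u⟫) * Real.exp (-(2 * Λ) * t)
          + ρ t * (-(2 * Λ) * Real.exp (-(2 * Λ) * t))) t := by
      intro t ht
      have hexp : HasDerivAt (fun s : ℝ => Real.exp (-(2 * Λ) * s))
          (-(2 * Λ) * Real.exp (-(2 * Λ) * t)) t := by
        have h1 : HasDerivAt (fun s : ℝ => -(2 * Λ) * s) (-(2 * Λ)) t := by
          simpa using (hasDerivAt_id t).const_mul (-(2 * Λ))
        simpa [mul_comm] using h1.exp
      exact (hρderiv t ht).mul hexp
    have hρnonneg : ∀ t, 0 ≤ ρ t := fun t => real_inner_self_nonneg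
    have hφanti : AntitoneOn φ (Icc T (T + h)) := by
      apply antitoneOn_of_deriv_nonpos (convex_Icc _ _)
      · exact fun t ht => (hφderiv t ht).continuousAt.continuousWithinAt
      · intro t ht
        rw [interior_Icc] at ht
        exact (hφderiv t (Ioo_subset_Icc_self ht)).differentiableAt.differentiableWithinAt
      · intro t ht
        rw [interior_Icc] at ht
        rw [(hφderiv t (Ioo_subset_Icc_self ht)).deriv]
        have hb := hbound t (Ioo_subset_Icc_self ht)
        have hexppos : 0 < Real.exp (-(2 * Λ) * t) := Real.exp_pos _
        nlinarith [hρnonneg t]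
    have hρT : ρ T = 0 := by
      have e : gradient (distGamma Ω) (z T) - u = 0 := by rw [hgw]; exact sub_self u
      show ⟪gradient (distGamma Ω) (z T) - u, gradient (distGamma Ω) (z T) - u⟫ = (0:ℝ)
      rw [e]
      simp
    have hGu : ∀ t ∈ Icc T (T + h), gradient (distGamma Ω) (z t) = u := by
      intro t ht
      have h1 : φ t ≤ φ T := hφanti (left_mem_Icc.mpr (by linarith)) ht ht.1
      have hφT : φ T = 0 := by
        show ρ T * Real.exp (-(2 * Λ) * T) = 0
        rw [hρT]; ring
      have hexppos : 0 < Real.exp (-(2 * Λ) * t) := Real.exp_pos _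
      have hφt : (0:ℝ) ≤ φ t := mul_nonneg (hρnonneg t) (Real.exp_pos _).le
      have hρzero : ρ t = 0 := by
        have hφle : ρ t * Real.exp (-(2 * Λ) * t) ≤ 0 := by
          have : φ t ≤ 0 := by linarith [hφT ▸ h1]
          exact this
        nlinarith [hρnonneg t]
      have h0 : ⟪gradient (distGamma Ω) (z t) - u, gradient (distGamma Ω) (z t) - u⟫ = (0:ℝ) :=
        hρzero
      exact sub_eq_zero.mp (inner_self_eq_zero.mp h0)
    -- δ(z t) = t on the interval
    set ψ : ℝ → ℝ := fun t => distGamma Ω (z t) - t with hψdef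
    have hψderiv : ∀ t ∈ Icc T (T + h), HasDerivAt ψ 0 t := by
      intro t ht
      have hzd : HasDerivAt z u t := by
        have : HasDerivAt (fun s : ℝ => p + s • u) u t := by
          simpa using ((hasDerivAt_id t).smul_const u).const_add p
        exact this
      have hdd : DifferentiableAt ℝ (distGamma Ω) (z t) :=
        (hc2.contDiffAt ((isOpen_U hΩo ε).mem_nhds ⟨(hztU t ht).1,
          (hztU t ht).2⟩)).differentiableAt (by simp)
      have h1 : HasDerivAt (fun s => distGamma Ω (z s)) (fderiv ℝ (distGamma Ω) (z t) u) t :=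
        hdd.hasFDerivAt.comp_hasDerivAt t hzd
      have h2 : fderiv ℝ (distGamma Ω) (z t) u = 1 := by
        rw [← inner_gradient_apply, hGu t ht, real_inner_self_eq_norm_sq, hnu]
        norm_num
      have h3 := h1.sub (hasDerivAt_id t)
      rw [h2] at h3
      simp only [sub_self] at h3
      exact h3
    have hψconst := constant_of_has_deriv_right_zero (f := ψ) (a := T) (b := T + h)
      (fun t ht => (hψderiv t ht).continuousAt.continuousWithinAt)
      (fun t ht => (hψderiv t (Ico_subset_Icc_self ht)).hasDerivWithinAt)
    have hψT : ψ T = 0 := by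
      show distGamma Ω (z T) - T = 0
      rw [hδT]; ring
    intro t ht hle
    have hψt : ψ t = 0 := by rw [hψconst t ht, hψT]
    have hδzt : distGamma Ω (z t) = t := by
      have h4 : distGamma Ω (z t) - t = 0 := hψt
      linarith
    exact ⟨⟨le_trans hTmem.1.1 ht.1, hle⟩, subset_closure (hztU t ht).1, hδzt⟩
  refine ⟨p, u, hnu, hpt, ?_⟩
  intro t ht
  have htS : t ∈ S := by
    by_contra htS
    have hAne : (S ∩ Iic t).Nonempty := ⟨t₀, ht₀S, ht.1⟩
    have hAbdd : BddAbove (S ∩ Iic t) := ⟨t, fun s hs => hs.2⟩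
    have hAclosed : IsClosed (S ∩ Iic t) := hSclosed.inter isClosed_Iic
    have hTA : sSup (S ∩ Iic t) ∈ S ∩ Iic t := hAclosed.csSup_mem hAne hAbdd
    set T := sSup (S ∩ Iic t) with hTdef
    have hTS : T ∈ S := hTA.1
    have hTt : T ≤ t := hTA.2
    have hTltt : T < t := lt_of_le_of_ne hTt (fun hEq => htS (hEq ▸ hTS))
    have hTlt' : T < t' := lt_of_lt_of_le hTltt ht.2
    obtain ⟨hh, hh0, hstep⟩ := hloc T hTS hTlt'
    have ht1mem : min (T + hh) t ∈ Icc T (T + hh) :=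
      ⟨le_min (by linarith) (le_of_lt hTltt), min_le_left _ _⟩
    have ht1le : min (T + hh) t ≤ t' := le_trans (min_le_right _ _) ht.2
    have ht1S : min (T + hh) t ∈ S := hstep _ ht1mem ht1le
    have ht1leT : min (T + hh) t ≤ T := le_csSup hAbdd ⟨ht1S, mem_Iic.mpr (min_le_right _ _)⟩
    have hlt : T < min (T + hh) t := lt_min (by linarith) hTltt
    linarith
  exact ⟨hmem t htS, htS.2.2⟩


lemma M_lower (hΩo : IsOpen Ω) (hΩb : Bornology.IsBounded Ω) (hε : 0 < ε)
    (hc2 : ContDiffOn ℝ 2 (distGamma Ω) {y ∈ Ω | distGamma Ω y < ε})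
    (hfr : (frontier Ω).Nonempty)
    {M : Ed d → ℝ} (hMs : ContDiffOn ℝ (⊤ : ℕ∞) M Ω) (hMp : ∀ x ∈ Ω, 0 < M x)
    {c : ℝ} (hc : 0 < c) (hM2 : ∀ x ∈ Ω, ‖gradient M x‖ ≤ M x / (c * distGamma Ω x))
    {x : Ed d} (hx : x ∈ Ω) (hxlt : distGamma Ω x < ε / 2) :
    ∃ x', x' ∈ Ω ∧ distGamma Ω x' = ε / 2 ∧
      M x' * (distGamma Ω x / (ε / 2)) ^ (1 / c) ≤ M x := by
  have hδ : 0 < distGamma Ω x := dg_pos hΩo hfr hx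
  obtain ⟨p, u, hnu, hpu, hseg⟩ := ray hΩo hΩb hc2 hfr hx (by linarith) (le_of_lt hxlt)
    (by linarith : ε / 2 < ε)
  set t₀ := distGamma Ω x with ht₀
  set z : ℝ → Ed d := fun t => p + t • u with hz
  set F : ℝ → ℝ := fun t => Real.log (M (z t)) - (1 / c) * Real.log t with hF
  have key : ∀ t ∈ Icc t₀ (ε / 2),
      HasDerivAt F (fderiv ℝ M (z t) u / M (z t) - (1 / c) * t⁻¹) t ∧
        fderiv ℝ M (z t) u / M (z t) - (1 / c) * t⁻¹ ≤ 0 := by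
    intro t ht
    obtain ⟨hzΩ, hzδ⟩ := hseg t ht
    have htpos : 0 < t := lt_of_lt_of_le hδ ht.1
    have hMz : 0 < M (z t) := hMp _ hzΩ
    have hzd : HasDerivAt z u t := by
      have : HasDerivAt (fun s : ℝ => p + s • u) u t := by
        simpa using ((hasDerivAt_id t).smul_const u).const_add p
      exact this
    have hMdiff : DifferentiableAt ℝ M (z t) :=
      (hMs.contDiffAt (hΩo.mem_nhds hzΩ)).differentiableAt (by simp)
    have h1 : HasDerivAt (fun s => M (z s)) (fderiv ℝ M (z t) u) t :=
      hMdiff.hasFDerivAt.comp_hasDerivAt t hzd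
    have h2' : HasDerivAt (fun s => Real.log (M (z s))) (fderiv ℝ M (z t) u / M (z t)) t :=
      h1.log hMz.ne'
    have h3 : HasDerivAt (fun s : ℝ => (1 / c) * Real.log s) ((1 / c) * t⁻¹) t :=
      (Real.hasDerivAt_log htpos.ne').const_mul (1 / c)
    refine ⟨h2'.sub h3, ?_⟩
    have hgrad : ‖fderiv ℝ M (z t)‖ ≤ M (z t) / (c * t) := by
      have hb := hM2 (z t) hzΩ
      rw [norm_gradient_eq, hzδ] at hb
      exact hb
    have happ : fderiv ℝ M (z t) u ≤ M (z t) / (c * t) := by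
      have h4 := (fderiv ℝ M (z t)).le_opNorm u
      rw [hnu, mul_one] at h4
      have h5 : fderiv ℝ M (z t) u ≤ ‖fderiv ℝ M (z t) u‖ := by
        rw [Real.norm_eq_abs]; exact le_abs_self _
      linarith
    have e1 : fderiv ℝ M (z t) u / M (z t) ≤ M (z t) / (c * t) / M (z t) :=
      (div_le_div_iff_of_pos_right hMz).mpr happ
    have e2 : M (z t) / (c * t) / M (z t) = (1 / c) * t⁻¹ := by
      field_simp
    linarith
  have hFanti : AntitoneOn F (Icc t₀ (ε / 2)) :=
    antitoneOn_of_deriv_nonpos (convex_Icc _ _)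
      (fun t ht => ((key t ht).1).continuousAt.continuousWithinAt)
      (fun t ht => by
        rw [interior_Icc] at ht
        exact ((key t (Ioo_subset_Icc_self ht)).1).differentiableAt.differentiableWithinAt)
      (fun t ht => by
        rw [interior_Icc] at ht
        rw [((key t (Ioo_subset_Icc_self ht)).1).deriv]
        exact (key t (Ioo_subset_Icc_self ht)).2)
  have hmem1 : t₀ ∈ Icc t₀ (ε / 2) := left_mem_Icc.mpr (le_of_lt hxlt)
  have hmem2 : ε / 2 ∈ Icc t₀ (ε / 2) := right_mem_Icc.mpr (le_of_lt hxlt)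
  have hFle : F (ε / 2) ≤ F t₀ := hFanti hmem1 hmem2 (le_of_lt hxlt)
  obtain ⟨hx'Ω, hx'δ⟩ := hseg (ε / 2) hmem2
  refine ⟨z (ε / 2), hx'Ω, hx'δ, ?_⟩
  have hM'pos : 0 < M (z (ε / 2)) := hMp _ hx'Ω
  have hMxpos : 0 < M x := hMp _ hx
  have hzt₀ : z t₀ = x := hpu
  have hrpos : 0 < t₀ / (ε / 2) := div_pos hδ (by linarith)
  have hFle' : Real.log (M (z (ε / 2))) - (1 / c) * Real.log (ε / 2) ≤
      Real.log (M x) - (1 / c) * Real.log t₀ := by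
    have e := hFle
    rw [hF] at e
    simpa [hzt₀] using e
  have hlog : Real.log (M (z (ε / 2)) * (t₀ / (ε / 2)) ^ (1 / c)) ≤ Real.log (M x) := by
    rw [Real.log_mul hM'pos.ne' (Real.rpow_pos_of_pos hrpos _).ne',
      Real.log_rpow hrpos, Real.log_div hδ.ne' (by positivity : (ε / 2) ≠ 0)]
    linarith [hFle']
  exact (Real.log_le_log_iff (by positivity) hMxpos).mp hlog

end H2Aux

/-- weak form of `(H2)` gives a power lower bound on `M`. -/
theorem H2_gives_power_lower_bound
    {d : ℕ} (hd : 2 ≤ d) (Ω : Set (Ed d)) (hΩo : IsOpen Ω)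
    (hΩb : Bornology.IsBounded Ω)
    (ε : ℝ) (hbdry : HasC2BoundaryCollar Ω ε)
    (M : Ed d → ℝ) (hMs : ContDiffOn ℝ (⊤ : ℕ∞) M Ω)
    (hMp : ∀ x ∈ Ω, 0 < M x)
    (c : ℝ) (hc : 0 < c)
    (h2 : ∀ x ∈ Ω, ‖gradient M x‖ ≤ M x / (c * distGamma Ω x)) :
    ∃ C' : ℝ, 0 < C' ∧ ∀ x ∈ Ω, C' * (distGamma Ω x) ^ (1 / c) ≤ M x := by
  obtain ⟨hε, hc2, -⟩ := hbdry
  rcases Set.eq_empty_or_nonempty Ω with hΩe | hne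
  · refine ⟨1, one_pos, fun x hx => ?_⟩
    rw [hΩe] at hx
    exact absurd hx (Set.notMem_empty x)
  have hfr : (frontier Ω).Nonempty := H2Aux.frontier_nonempty (by omega) hΩb hne
  have hε2 : 0 < ε / 2 := by linarith
  set K : Set (Ed d) := closure Ω ∩ {q | ε / 2 ≤ distGamma Ω q} with hK
  have hKsub : K ⊆ Ω := fun q hq =>
    H2Aux.mem_of_closure_of_pos hΩo hq.1 (lt_of_lt_of_le hε2 hq.2)
  have hKcl : IsClosed K := isClosed_closure.inter
    (isClosed_le continuous_const (Metric.continuous_infDist_pt _))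
  have hKb : Bornology.IsBounded K := hΩb.closure.subset inter_subset_left
  have hKcomp : IsCompact K := Metric.isCompact_of_isClosed_isBounded hKcl hKb
  have hKne : K.Nonempty := by
    obtain ⟨x₀, hx₀⟩ := hne
    by_cases hd0 : distGamma Ω x₀ < ε / 2
    · obtain ⟨x', hx'Ω, hx'δ, -⟩ := H2Aux.M_lower hΩo hΩb hε hc2 hfr hMs hMp hc h2 hx₀ hd0
      exact ⟨x', subset_closure hx'Ω, le_of_eq hx'δ.symm⟩
    · exact ⟨x₀, subset_closure hx₀, le_of_not_gt hd0⟩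
  obtain ⟨q₀, hq₀K, hq₀min'⟩ := hKcomp.exists_isMinOn hKne (hMs.continuousOn.mono hKsub)
  have hq₀min : ∀ q ∈ K, M q₀ ≤ M q := fun q hq => hq₀min' hq
  have hm₀ : 0 < M q₀ := hMp _ (hKsub hq₀K)
  obtain ⟨R, hR⟩ := hΩb.exists_norm_le
  obtain ⟨p₀, hp₀⟩ := id hfr
  set D : ℝ := max (R + ‖p₀‖) (ε / 2) with hD
  have hDpos : 0 < D := lt_of_lt_of_le hε2 (le_max_right _ _)
  have hdle : ∀ x ∈ Ω, distGamma Ω x ≤ D := by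
    intro x hx
    have h1 : distGamma Ω x ≤ dist x p₀ := Metric.infDist_le_dist_of_mem hp₀
    have h2' : dist x p₀ ≤ ‖x‖ + ‖p₀‖ := dist_le_norm_add_norm x p₀
    have h3 : ‖x‖ ≤ R := hR x hx
    exact le_trans (le_trans h1 h2') (le_trans (by linarith) (le_max_left _ _))
  refine ⟨M q₀ / D ^ (1 / c), by positivity, ?_⟩
  intro x hx
  have hδx : 0 < distGamma Ω x := H2Aux.dg_pos hΩo hfr hx
  have hDrpow : (0:ℝ) < D ^ (1 / c) := Real.rpow_pos_of_pos hDpos _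
  have hgoal_eq : M q₀ / D ^ (1 / c) * (distGamma Ω x) ^ (1 / c)
      = M q₀ * (distGamma Ω x / D) ^ (1 / c) := by
    rw [Real.div_rpow hδx.le hDpos.le]
    ring
  rw [hgoal_eq]
  by_cases hcase : distGamma Ω x < ε / 2
  · obtain ⟨x', hx'Ω, hx'δ, hMle⟩ := H2Aux.M_lower hΩo hΩb hε hc2 hfr hMs hMp hc h2 hx hcase
    have h1 : M q₀ ≤ M x' := hq₀min x' ⟨subset_closure hx'Ω, le_of_eq hx'δ.symm⟩
    have h2' : (distGamma Ω x / D) ^ (1 / c) ≤ (distGamma Ω x / (ε / 2)) ^ (1 / c) := by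
      apply Real.rpow_le_rpow (by positivity) _ (by positivity)
      gcongr
      exact le_max_right _ _
    have h3 : M q₀ * (distGamma Ω x / D) ^ (1 / c)
        ≤ M x' * (distGamma Ω x / (ε / 2)) ^ (1 / c) :=
      mul_le_mul h1 h2' (by positivity) (le_of_lt (hMp _ hx'Ω))
    linarith [hMle]
  · have h1 : M q₀ ≤ M x := hq₀min x ⟨subset_closure hx, le_of_not_gt hcase⟩
    have h2' : (distGamma Ω x / D) ^ (1 / c) ≤ 1 :=
      Real.rpow_le_one (by positivity) ((div_le_one hDpos).mpr (hdle x hx)) (by positivity)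
    nlinarith [hm₀, Real.rpow_nonneg (by positivity : (0:ℝ) ≤ distGamma Ω x / D) (1/c)]
end
end

section
/- (FENE potential satisfies (H3) with γ = 1.) Let d ≥ 2, ℓ > 0, and let V : B(0,ℓ) → ℝ be the FENE potential V(Q) = (ℓ²/2) log(1 − |Q|²/ℓ²) on the open ball B(0,ℓ) ⊂ ℝ^d. Then for every Q ∈ B(0,ℓ) and every h ∈ ℝ^d, the Hessian of V satisfies ⟨Hess V(Q) h, h⟩ ≤ −|h|². -/
open MeasureTheory Set Filter
open scoped Topology RealInnerProductSpace

noncomputable section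

section FeneAux

variable {d : ℕ}

lemma fene_W_pos {ℓ : ℝ} (hℓ : 0 < ℓ) {y : Ed d} (hy : ‖y‖ < ℓ) :
    0 < 1 - ‖y‖ ^ 2 / ℓ ^ 2 := by
  have h1 : ‖y‖ ^ 2 < ℓ ^ 2 := by
    have := norm_nonneg y
    nlinarith
  have h2 : (0 : ℝ) < ℓ ^ 2 := by positivity
  have : ‖y‖ ^ 2 / ℓ ^ 2 < 1 := (div_lt_one h2).mpr h1
  linarith

/-- fderiv of `W y = 1 - ‖y‖²/ℓ²`. -/
lemma fene_hasFDerivAt_W (ℓ : ℝ) (y : Ed d) :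
    HasFDerivAt (fun z : Ed d => 1 - ‖z‖ ^ 2 / ℓ ^ 2)
      (((-(2 / ℓ ^ 2)) : ℝ) • (innerSL ℝ y)) y := by
  have feq : (fun z : Ed d => 1 - ‖z‖ ^ 2 / ℓ ^ 2)
      = fun z : Ed d => 1 - (ℓ ^ 2)⁻¹ * ‖z‖ ^ 2 := by
    funext z; rw [div_eq_inv_mul]
  rw [feq]
  have h := (((hasStrictFDerivAt_norm_sq y).hasFDerivAt.const_mul
    ((ℓ ^ 2)⁻¹)).const_sub 1)
  refine h.congr_fderiv ?_
  ext v
  simp only [ContinuousLinearMap.smul_apply, ContinuousLinearMap.neg_apply, innerSL_apply_apply,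
    smul_eq_mul, two_smul, ContinuousLinearMap.add_apply]
  ring

/-- On the ball, the gradient of the FENE potential is
`-(1 - ‖y‖²/ℓ²)⁻¹ • y`. -/
lemma fene_gradient {ℓ : ℝ} (hℓ : 0 < ℓ) (V : Ed d → ℝ)
    (hV : V = fun Q : Ed d => ℓ ^ 2 / 2 * Real.log (1 - ‖Q‖ ^ 2 / ℓ ^ 2))
    {y : Ed d} (hy : ‖y‖ < ℓ) :
    gradient V y = (-(1 - ‖y‖ ^ 2 / ℓ ^ 2)⁻¹) • y := by
  have hW := fene_W_pos hℓ hy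
  have hℓ2 : (ℓ : ℝ) ^ 2 ≠ 0 := by positivity
  have hF : HasFDerivAt V
      (InnerProductSpace.toDual ℝ (Ed d) ((-(1 - ‖y‖ ^ 2 / ℓ ^ 2)⁻¹) • y)) y := by
    have h1 := ((fene_hasFDerivAt_W ℓ y).log hW.ne').const_mul (ℓ ^ 2 / 2)
    rw [hV]
    refine h1.congr_fderiv ?_
    ext v
    simp only [InnerProductSpace.toDual_apply_apply, ContinuousLinearMap.smul_apply,
      ContinuousLinearMap.coe_smul', Pi.smul_apply, ContinuousLinearMap.neg_apply,
      innerSL_apply_apply, smul_eq_mul,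
      real_inner_smul_left, two_smul, ContinuousLinearMap.add_apply]
    have hs : ℓ ^ 2 - ‖y‖ ^ 2 ≠ 0 := by nlinarith [norm_nonneg y]
    field_simp
  exact ((hasGradientAt_iff_hasFDerivAt).mpr hF).gradient

end FeneAux

/-- the FENE potential satisfies `(H3)` with `γ = 1`. -/
theorem fene_potential_H3
    {d : ℕ} (hd : 2 ≤ d) (ℓ : ℝ) (hℓ : 0 < ℓ)
    (V : Ed d → ℝ)
    (hV : V = fun Q : Ed d => ℓ ^ 2 / 2 * Real.log (1 - ‖Q‖ ^ 2 / ℓ ^ 2)) :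
    ∀ Q : Ed d, ‖Q‖ < ℓ → ∀ h : Ed d,
      ⟪fderiv ℝ (fun y => gradient V y) Q h, h⟫ ≤ -‖h‖ ^ 2 := by
  intro Q hQ h
  have hℓ2 : (0 : ℝ) < ℓ ^ 2 := by positivity
  set W : Ed d → ℝ := fun y => 1 - ‖y‖ ^ 2 / ℓ ^ 2 with hWdef
  set G : Ed d → Ed d := fun y => (-(W y)⁻¹) • y with hGdef
  have hWQ : 0 < W Q := fene_W_pos hℓ hQ
  -- gradient V agrees with G near Q
  have hU : {y : Ed d | ‖y‖ < ℓ} ∈ 𝓝 Q := by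
    have : IsOpen {y : Ed d | ‖y‖ < ℓ} := isOpen_lt continuous_norm continuous_const
    exact this.mem_nhds hQ
  have hEq : (fun y => gradient V y) =ᶠ[𝓝 Q] G :=
    Filter.eventuallyEq_of_mem hU fun y hy => fene_gradient hℓ V hV hy
  -- derivative of G at Q
  set c' : Ed d →L[ℝ] ℝ :=
    ((-(2 / ℓ ^ 2)) * (W Q ^ 2)⁻¹) • (innerSL ℝ Q) with hc'def
  have hc : HasFDerivAt (fun y => -(W y)⁻¹) c' Q := by
    have h1 : HasFDerivAt (fun y => (W y)⁻¹)
        ((-(W Q ^ 2)⁻¹) • (((-(2 / ℓ ^ 2)) : ℝ) • (innerSL ℝ Q))) Q :=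
      (hasDerivAt_inv hWQ.ne').comp_hasFDerivAt Q (fene_hasFDerivAt_W ℓ Q)
    have h2 := h1.neg
    refine h2.congr_fderiv ?_
    ext v
    simp only [hc'def, ContinuousLinearMap.smul_apply, ContinuousLinearMap.neg_apply,
      innerSL_apply_apply, smul_eq_mul]
    ring
  have hG : HasFDerivAt G
      ((-(W Q)⁻¹) • (ContinuousLinearMap.id ℝ (Ed d)) + c'.smulRight Q) Q :=
    hc.smul (hasFDerivAt_id Q)
  have hfd : fderiv ℝ (fun y => gradient V y) Q =
      (-(W Q)⁻¹) • (ContinuousLinearMap.id ℝ (Ed d)) + c'.smulRight Q := by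
    rw [hEq.fderiv_eq, hG.fderiv]
  rw [hfd]
  have happ : ((-(W Q)⁻¹) • (ContinuousLinearMap.id ℝ (Ed d)) + c'.smulRight Q) h
      = (-(W Q)⁻¹) • h + (c' h) • Q := by
    simp
  rw [happ]
  have hc'h : c' h = (-(2 / ℓ ^ 2)) * (W Q ^ 2)⁻¹ * ⟪Q, h⟫ := by
    simp [hc'def]
  rw [inner_add_left, real_inner_smul_left, real_inner_smul_left, real_inner_self_eq_norm_sq,
    hc'h]
  have hterm2 : (-(2 / ℓ ^ 2)) * (W Q ^ 2)⁻¹ * ⟪Q, h⟫ * ⟪Q, h⟫ ≤ 0 := by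
    have heq : (-(2 / ℓ ^ 2)) * (W Q ^ 2)⁻¹ * ⟪Q, h⟫ * ⟪Q, h⟫
        = -((2 / ℓ ^ 2) * (W Q ^ 2)⁻¹ * ⟪Q, h⟫ ^ 2) := by ring
    rw [heq, neg_nonpos]
    positivity
  have hWle : W Q ≤ 1 := by
    have : 0 ≤ ‖Q‖ ^ 2 / ℓ ^ 2 := by positivity
    simp only [hWdef]
    linarith
  have hinv : 1 ≤ (W Q)⁻¹ := (one_le_inv₀ hWQ).2 hWle
  have hterm1 : -(W Q)⁻¹ * ‖h‖ ^ 2 ≤ -‖h‖ ^ 2 := by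
    have : (0:ℝ) ≤ ‖h‖ ^ 2 := by positivity
    nlinarith
  linarith
end
end
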